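/- arXiv:1206.6150 — 2 statements merged into one kernel-verified Lean document; each statement's English description precedes it below -/
import Mathlib

section
/- Let X be a random variable on {0,1}^n with min-entropy H_∞(X) ≥ t, and let H be a uniformly random member of a 2-universal family of hash functions from {0,1}^n to {0,1}^s with s ≤ t. Then the statistical distance between the distribution of (H, H(X)) and the distribution of (H, U_s), where U_s is uniform on {0,1}^s independent of H, is at most (1/2)·2^{-(t-s)/2}. -/
open Finset

/-- Leftover Hash Lemma: let `X` be a random variable on `{0,1}^n`, with
distribution `p`, of min-entropy at least `t` (i.e. `p x ≤ 2^{-t}` for all `x`), and let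
`H` be a uniform member of a 2-universal family (indexed by finite `I`) of hash functions
from `{0,1}^n` to `{0,1}^s` with `s ≤ t`.  Then the statistical distance between the
distribution of `(H, H(X))` and that of `(H, U_s)` (with `U_s` uniform and independent
of `H`) is at most `(1/2)·2^{-(t-s)/2}`. -/
theorem leftover_hash_lemma (n s : ℕ) (t : ℝ) (hst : (s : ℝ) ≤ t)
    {I : Type} [Fintype I] [Nonempty I]
    (H : I → (Fin n → Bool) → (Fin s → Bool))
    (huniv : ∀ x y : Fin n → Bool, x ≠ y →
      (((Finset.univ.filter (fun i : I => H i x = H i y)).card : ℝ) / (Fintype.card I : ℝ))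
        ≤ (2 : ℝ) ^ (-(s : ℝ)))
    (p : (Fin n → Bool) → ℝ) (hp0 : ∀ x, 0 ≤ p x) (hp1 : ∑ x, p x = 1)
    (hmin : ∀ x, p x ≤ (2 : ℝ) ^ (-t)) :
    (1 / 2) * ∑ i : I, ∑ z : Fin s → Bool,
        |(1 / (Fintype.card I : ℝ)) * (∑ x ∈ Finset.univ.filter (fun x => H i x = z), p x)
          - (1 / (Fintype.card I : ℝ)) * (2 : ℝ) ^ (-(s : ℝ))|
      ≤ (1 / 2) * (2 : ℝ) ^ (-(t - (s : ℝ)) / 2) := by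
  classical
  set Nr : ℝ := (Fintype.card I : ℝ) with hNr
  have hNpos : (0:ℝ) < Nr := by
    rw [hNr]; exact_mod_cast Fintype.card_pos (α := I)
  have hNe : Nr ≠ 0 := ne_of_gt hNpos
  set S : I → (Fin s → Bool) → ℝ :=
    fun i z => ∑ x ∈ Finset.univ.filter (fun x => H i x = z), p x with hS
  set u : ℝ := (1 / Nr) * (2 : ℝ) ^ (-(s : ℝ)) with hu
  -- cardinality of the hash output space
  have hZcard : (Fintype.card (Fin s → Bool) : ℝ) = 2 ^ s := by
    simp [Fintype.card_fun]
  have h2s : ((2:ℝ) ^ s) * (2:ℝ) ^ (-(s:ℝ)) = 1 := by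
    rw [← Real.rpow_natCast 2 s, ← Real.rpow_add (by norm_num)]
    simp
  -- sum of S over z is 1
  have hSsum : ∀ i, ∑ z, S i z = 1 := by
    intro i
    rw [hS]
    rw [Finset.sum_fiberwise Finset.univ (fun x => H i x) p]
    exact hp1
  have hS0 : ∀ i z, 0 ≤ S i z := fun i z => Finset.sum_nonneg fun x _ => hp0 x
  -- key: sum of squares of S
  have hfiber : ∀ i, ∑ z, (S i z) ^ 2
      = ∑ x, ∑ y, (if H i y = H i x then p x * p y else 0) := by
    intro i
    have h1 : ∑ z, (S i z) ^ 2
        = ∑ z, ∑ x ∈ Finset.univ.filter (fun x => H i x = z),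
            (p x * S i (H i x)) := by
      refine Finset.sum_congr rfl fun z _ => ?_
      rw [sq, hS, Finset.sum_mul]
      refine Finset.sum_congr rfl fun x hx => ?_
      simp only [Finset.mem_filter, Finset.mem_univ, true_and] at hx
      rw [hx]
    rw [h1, Finset.sum_fiberwise Finset.univ (fun x => H i x)
      (fun x => p x * S i (H i x))]
    refine Finset.sum_congr rfl fun x _ => ?_
    rw [hS, Finset.mul_sum, Finset.sum_filter]
  -- collision bound
  have hcol : ∑ i, ∑ z, (S i z) ^ 2 ≤ Nr * ((2:ℝ) ^ (-t) + (2:ℝ) ^ (-(s:ℝ))) := by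
    have key : ∑ i, ∑ z, (S i z) ^ 2
        = ∑ x, ∑ y, (p x * p y) *
            ((Finset.univ.filter (fun i : I => H i x = H i y)).card : ℝ) := by
      rw [Finset.sum_congr rfl (fun i _ => hfiber i)]
      rw [Finset.sum_comm]
      refine Finset.sum_congr rfl fun x _ => ?_
      rw [Finset.sum_comm]
      refine Finset.sum_congr rfl fun y _ => ?_
      rw [← Finset.sum_filter, Finset.sum_const, nsmul_eq_mul, mul_comm]
      have hset : Finset.univ.filter (fun i : I => H i y = H i x)
          = Finset.univ.filter (fun i : I => H i x = H i y) := by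
        ext i; simp [eq_comm]
      rw [hset]
    rw [key]
    have hbound : ∀ x y : Fin n → Bool,
        (p x * p y) * ((Finset.univ.filter (fun i : I => H i x = H i y)).card : ℝ)
          ≤ (if x = y then p x * (2:ℝ)^(-t) * Nr else 0)
            + p x * p y * (Nr * (2:ℝ)^(-(s:ℝ))) := by
      intro x y
      by_cases hxy : x = y
      · subst hxy
        rw [if_pos rfl]
        have hcard : ((Finset.univ.filter (fun i : I => H i x = H i x)).card : ℝ) ≤ Nr := by
          rw [hNr]
          exact_mod_cast Finset.card_filter_le _ _
        have h1 : p x * p x * ((Finset.univ.filter (fun i : I => H i x = H i x)).card : ℝ)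
            ≤ p x * (2:ℝ)^(-t) * Nr :=
          mul_le_mul (mul_le_mul_of_nonneg_left (hmin x) (hp0 x)) hcard
            (Nat.cast_nonneg _)
            (mul_nonneg (hp0 x) (Real.rpow_nonneg (by norm_num) _))
        have h2 : 0 ≤ p x * p x * (Nr * (2:ℝ)^(-(s:ℝ))) :=
          mul_nonneg (mul_nonneg (hp0 x) (hp0 x))
            (mul_nonneg hNpos.le (Real.rpow_nonneg (by norm_num) _))
        linarith
      · simp only [if_neg hxy]
        have h1 := huniv x y hxy
        have h2 : ((Finset.univ.filter (fun i : I => H i x = H i y)).card : ℝ)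
            ≤ Nr * (2:ℝ)^(-(s:ℝ)) := by
          rw [div_le_iff₀ hNpos] at h1
          linarith [h1]
        have := mul_le_mul_of_nonneg_left h2 (mul_nonneg (hp0 x) (hp0 y))
        linarith
    have hd : ∑ x : Fin n → Bool, ∑ y : Fin n → Bool,
        (if x = y then p x * (2:ℝ)^(-t) * Nr else 0) = (2:ℝ)^(-t) * Nr := by
      simp only [Finset.sum_ite_eq, Finset.mem_univ, if_true]
      rw [← Finset.sum_mul, ← Finset.sum_mul, hp1, one_mul]
    have he : ∑ x : Fin n → Bool, ∑ y : Fin n → Bool,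
        p x * p y * (Nr * (2:ℝ)^(-(s:ℝ))) = Nr * (2:ℝ)^(-(s:ℝ)) := by
      have hinner : ∀ x, ∑ y : Fin n → Bool, p x * p y * (Nr * (2:ℝ)^(-(s:ℝ)))
          = p x * (Nr * (2:ℝ)^(-(s:ℝ))) := by
        intro x
        rw [← Finset.sum_mul, ← Finset.mul_sum, hp1, mul_one]
      rw [Finset.sum_congr rfl fun x _ => hinner x, ← Finset.sum_mul, hp1, one_mul]
    calc ∑ x, ∑ y, (p x * p y) *
            ((Finset.univ.filter (fun i : I => H i x = H i y)).card : ℝ)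
        ≤ ∑ x, ∑ y, ((if x = y then p x * (2:ℝ)^(-t) * Nr else 0)
            + p x * p y * (Nr * (2:ℝ)^(-(s:ℝ)))) :=
          Finset.sum_le_sum fun x _ => Finset.sum_le_sum fun y _ => hbound x y
      _ = Nr * ((2:ℝ) ^ (-t) + (2:ℝ) ^ (-(s:ℝ))) := by
          simp only [Finset.sum_add_distrib]
          rw [hd, he]
          ring
  -- sum of squares of (q - u)
  have hsq : ∑ i : I, ∑ z, ((1/Nr) * S i z - u) ^ 2 ≤ (2:ℝ)^(-t) / Nr := by
    have hexp : ∀ i z, ((1/Nr) * S i z - u) ^ 2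
        = (1/Nr)^2 * (S i z)^2 - 2 * u * ((1/Nr) * S i z) + u^2 := by
      intro i z; ring
    have hSS : ∑ i : I, ∑ z, S i z = Nr := by
      rw [Finset.sum_congr rfl fun i _ => hSsum i, Finset.sum_const,
        Finset.card_univ, nsmul_eq_mul, mul_one, hNr]
    have htot : ∑ i : I, ∑ z, ((1/Nr) * S i z - u) ^ 2
        = (1/Nr)^2 * (∑ i, ∑ z, (S i z)^2) - 2 * u + Nr * (2^s : ℝ) * u^2 := by
      simp only [hexp, Finset.sum_add_distrib, Finset.sum_sub_distrib,
        ← Finset.mul_sum, hSS]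
      simp only [Finset.sum_const, nsmul_eq_mul, Finset.card_univ, hZcard]
      rw [← hNr]
      field_simp
    rw [htot]
    have hu2 : Nr * (2^s : ℝ) * u^2 = (2:ℝ)^(-(s:ℝ)) / Nr := by
      rw [hu]
      field_simp
      linear_combination h2s
    have h2u : 2 * u = 2 * (2:ℝ)^(-(s:ℝ)) / Nr := by rw [hu]; ring
    have hmain : (1/Nr)^2 * (∑ i, ∑ z, (S i z)^2)
        ≤ (1/Nr)^2 * (Nr * ((2:ℝ) ^ (-t) + (2:ℝ) ^ (-(s:ℝ)))) :=
      mul_le_mul_of_nonneg_left hcol (by positivity)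
    have heq : (1/Nr)^2 * (Nr * ((2:ℝ) ^ (-t) + (2:ℝ) ^ (-(s:ℝ))))
        = ((2:ℝ) ^ (-t) + (2:ℝ) ^ (-(s:ℝ))) / Nr := by
      field_simp
    rw [heq] at hmain
    rw [hu2, h2u]
    have : ((2:ℝ) ^ (-t) + (2:ℝ) ^ (-(s:ℝ))) / Nr - 2 * (2:ℝ)^(-(s:ℝ)) / Nr
        + (2:ℝ)^(-(s:ℝ)) / Nr = (2:ℝ)^(-t) / Nr := by ring
    linarith
  -- Cauchy-Schwarz
  set A : ℝ := ∑ i : I, ∑ z : Fin s → Bool, |(1/Nr) * S i z - u| with hA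
  have hA0 : 0 ≤ A := Finset.sum_nonneg fun i _ =>
    Finset.sum_nonneg fun z _ => abs_nonneg _
  have hCS : A ^ 2 ≤ (Nr * 2^s) * ((2:ℝ)^(-t) / Nr) := by
    have h1 : A = ∑ q : I × (Fin s → Bool), |(1/Nr) * S q.1 q.2 - u| := by
      rw [hA, Fintype.sum_prod_type]
    have h2 : A ^ 2 ≤ ((Finset.univ : Finset (I × (Fin s → Bool))).card : ℝ)
        * ∑ q : I × (Fin s → Bool), |(1/Nr) * S q.1 q.2 - u| ^ 2 := by
      rw [h1]
      exact sq_sum_le_card_mul_sum_sq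
        (s := (Finset.univ : Finset (I × (Fin s → Bool))))
        (f := fun q => |(1/Nr) * S q.1 q.2 - u|)
    have h3 : ∑ q : I × (Fin s → Bool), |(1/Nr) * S q.1 q.2 - u| ^ 2
        = ∑ i : I, ∑ z, ((1/Nr) * S i z - u) ^ 2 := by
      rw [Fintype.sum_prod_type]
      exact Finset.sum_congr rfl fun i _ => Finset.sum_congr rfl fun z _ => sq_abs _
    have h4 : ((Finset.univ : Finset (I × (Fin s → Bool))).card : ℝ) = Nr * 2^s := by
      rw [Finset.card_univ, Fintype.card_prod]
      push_cast
      rw [← hNr, hZcard]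
    rw [h3, h4] at h2
    calc A ^ 2 ≤ (Nr * 2^s) * (∑ i : I, ∑ z, ((1/Nr) * S i z - u) ^ 2) := h2
      _ ≤ (Nr * 2^s) * ((2:ℝ)^(-t) / Nr) :=
        mul_le_mul_of_nonneg_left hsq (by positivity)
  have hpow : (Nr * 2^s) * ((2:ℝ)^(-t) / Nr) = (2:ℝ) ^ ((s:ℝ) - t) := by
    rw [Real.rpow_sub (by norm_num), Real.rpow_natCast]
    rw [Real.rpow_neg (by norm_num)]
    field_simp
  rw [hpow] at hCS
  have hfinal : A ≤ (2:ℝ) ^ (-(t - (s:ℝ)) / 2) := by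
    have h1 : A ≤ Real.sqrt ((2:ℝ) ^ ((s:ℝ) - t)) := by
      have := Real.sqrt_le_sqrt hCS
      rwa [Real.sqrt_sq hA0] at this
    have h2 : Real.sqrt ((2:ℝ) ^ ((s:ℝ) - t)) = (2:ℝ) ^ (-(t - (s:ℝ)) / 2) := by
      rw [Real.sqrt_eq_rpow, ← Real.rpow_mul (by norm_num)]
      congr 1
      ring
    rwa [h2] at h1
  have hh : (1/2 : ℝ) * A ≤ (1/2) * (2:ℝ) ^ (-(t - (s:ℝ)) / 2) := by linarith
  exact hh
end

section
/- There is no linear (or more generally, unitary) map U on ℂ² ⊗ ℂ² satisfying U(|ψ⟩ ⊗ |0⟩) = |ψ⟩ ⊗ |ψ⟩ for all unit vectors |ψ⟩ ∈ ℂ². (No-cloning theorem.) -/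
open scoped TensorProduct

/-! A linear cloner copying `x` and `y` sends `(s • x + t • y) ⊗ e` to `s • x ⊗ x + t • y ⊗ y`,
whereas the clone `(s • x + t • y) ⊗ (s • x + t • y)` has the cross term `s * t • x ⊗ y`. Reading
off the `x ⊗ y` coefficient on `|0⟩, |1⟩` and `|+⟩ = (|0⟩ + |1⟩)/√2` gives `1/2 = 0`. -/

section
variable {R M : Type*} [CommRing R] [AddCommGroup M] [Module R M]

theorem LinearMap.apply_smul_add_smul_tmul_of_clones (U : M ⊗[R] M →ₗ[R] M ⊗[R] M) {e x y : M}
    (hx : U (x ⊗ₜ e) = x ⊗ₜ x) (hy : U (y ⊗ₜ e) = y ⊗ₜ y) (s t : R) :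
    U ((s • x + t • y) ⊗ₜ e) = s • (x ⊗ₜ x) + t • (y ⊗ₜ y) := by
  rw [TensorProduct.add_tmul, ← TensorProduct.smul_tmul', ← TensorProduct.smul_tmul', map_add,
    map_smul, map_smul, hx, hy]

theorem LinearMap.mul_eq_zero_of_clones (U : M ⊗[R] M →ₗ[R] M ⊗[R] M) {e x y : M}
    (f g : M →ₗ[R] R) (hfx : f x = 1) (hfy : f y = 0) (hgx : g x = 0) (hgy : g y = 1)
    (hx : U (x ⊗ₜ e) = x ⊗ₜ x) (hy : U (y ⊗ₜ e) = y ⊗ₜ y) (s t : R)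
    (hxy : U ((s • x + t • y) ⊗ₜ e) = (s • x + t • y) ⊗ₜ (s • x + t • y)) : s * t = 0 := by
  rw [U.apply_smul_add_smul_tmul_of_clones hx hy] at hxy
  have coeff := congrArg (LinearMap.mul' R R ∘ₗ TensorProduct.map f g) hxy
  simpa [hfx, hfy, hgx, hgy] using coeff.symm

end

/-- no-cloning theorem: there is no linear map `U` on `ℂ² ⊗ ℂ²`
satisfying `U(|ψ⟩ ⊗ |0⟩) = |ψ⟩ ⊗ |ψ⟩` for every unit vector `|ψ⟩ ∈ ℂ²`. -/
theorem no_cloning :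
    ¬ ∃ U : (EuclideanSpace ℂ (Fin 2) ⊗[ℂ] EuclideanSpace ℂ (Fin 2)) →ₗ[ℂ]
        (EuclideanSpace ℂ (Fin 2) ⊗[ℂ] EuclideanSpace ℂ (Fin 2)),
      ∀ ψ : EuclideanSpace ℂ (Fin 2), ‖ψ‖ = 1 →
        U (ψ ⊗ₜ[ℂ] (EuclideanSpace.single 0 1)) = ψ ⊗ₜ[ℂ] ψ := by
  rintro ⟨U, hU⟩
  set e₀ : EuclideanSpace ℂ (Fin 2) := EuclideanSpace.single 0 1
  set e₁ : EuclideanSpace ℂ (Fin 2) := EuclideanSpace.single 1 1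
  set c : ℂ := (Real.sqrt 2 : ℂ)⁻¹
  have norm_plus : ‖c • e₀ + c • e₁‖ = 1 := by
    rw [EuclideanSpace.norm_eq, Fin.sum_univ_two]
    norm_num [c, e₀, e₁]
  have hcc : c * c = 0 :=
    U.mul_eq_zero_of_clones (EuclideanSpace.projₗ 0) (EuclideanSpace.projₗ 1)
      (by simp [e₀]) (by simp [e₁]) (by simp [e₀]) (by simp [e₁])
      (hU e₀ (by simp [e₀])) (hU e₁ (by simp [e₁])) c c (hU _ norm_plus)
  simp [c] at hcc
end
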